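/- Let u₁(t) = tanh(t/√2), ε > 0, u̇_ε(t) := u₁'(t/ε), and let H : ℝ → ℝ satisfy H(t) = H₀ + a·t + R(t) with |R(t)| ≤ K t² for |t| ≤ 1 and H bounded. Then |∫_ℝ H(t)·u̇_ε(t)² dt - H₀·ε·c| ≤ C·ε³ for some constant C depending on a, K, ‖H‖_∞, where c = ∫_ℝ (u₁')² ds. -/

import Mathlib

/-!
After the substitution `t = ε s` the integral becomes `ε ∫ H(ε s) w(s) ds` with the weight
`w = (u₁')²`. Removing the first-order Taylor polynomial `H₀ + a ε s` leaves a remainder bounded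
by `M ε² s²` for every `s`: by the Taylor bound where `|ε s| ≤ 1`, by the boundedness of `H`
elsewhere. The linear term integrates to zero because `w` is even, and `s² w(s)` is integrable
because `(1 + s²)² w(s) ≤ 2`, which follows from `u₁'(s) = sech²(s/√2)/√2` and `x² ≤ sinh² x`.
-/

open MeasureTheory Real

section Weight

variable {w : ℝ → ℝ}

lemma integrable_of_one_add_sq_mul_abs_le (hw : AEStronglyMeasurable w) {C : ℝ}
    (h : ∀ s, (1 + s ^ 2) * |w s| ≤ C) : Integrable w := by
  refine (integrable_inv_one_add_sq.const_mul C).mono' hw (ae_of_all _ fun s => ?_)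
  rw [norm_eq_abs, ← div_eq_mul_inv, le_div_iff₀ (by positivity), mul_comm]
  exact h s

lemma integrable_mul_of_integrable_sq_mul (hw : Integrable w)
    (hw₂ : Integrable fun s => s ^ 2 * w s) : Integrable fun s => s * w s := by
  refine (hw.abs.add hw₂.abs).mono' (continuous_id.aestronglyMeasurable.mul hw.1)
    (ae_of_all _ fun s => ?_)
  have hs : |s| ≤ 1 + s ^ 2 := by nlinarith [sq_abs s, sq_nonneg (|s| - 1)]
  rw [norm_mul, norm_eq_abs, norm_eq_abs, Pi.add_apply, abs_mul (s ^ 2),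
    abs_of_nonneg (sq_nonneg s)]
  nlinarith [abs_nonneg (w s)]

lemma integral_mul_eq_zero_of_even (hw : ∀ s, w (-s) = w s) : ∫ s, s * w s = 0 := by
  have h := integral_neg_eq_self (fun s => s * w s) volume
  simp only [hw, neg_mul, integral_neg] at h
  linarith

end Weight

lemma abs_sub_linear_le_sq_of_abs_le {H : ℝ → ℝ} {H₀ a K B : ℝ} (hB : ∀ t, |H t| ≤ B)
    (hR : ∀ t : ℝ, |t| ≤ 1 → |H t - (H₀ + a * t)| ≤ K * t ^ 2) (t : ℝ) :
    |H t - (H₀ + a * t)| ≤ (|K| + |B| + |H₀| + |a|) * t ^ 2 := by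
  rcases le_or_gt |t| 1 with ht | ht
  · calc |H t - (H₀ + a * t)| ≤ K * t ^ 2 := hR t ht
      _ ≤ (|K| + |B| + |H₀| + |a|) * t ^ 2 := by
        gcongr
        linarith [le_abs_self K, abs_nonneg B, abs_nonneg H₀, abs_nonneg a]
  · have h₁ : 1 ≤ t ^ 2 := by nlinarith [sq_abs t]
    have h₂ : |t| ≤ t ^ 2 := by nlinarith [sq_abs t]
    calc |H t - (H₀ + a * t)| ≤ |H t| + (|H₀| + |a| * |t|) := by
          rw [← abs_mul]; exact (abs_sub _ _).trans (by gcongr; exact abs_add_le _ _)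
      _ ≤ |B| * t ^ 2 + (|H₀| * t ^ 2 + |a| * t ^ 2) := by
        gcongr
        · exact (hB t).trans ((le_abs_self B).trans (le_mul_of_one_le_right (abs_nonneg B) h₁))
        · exact le_mul_of_one_le_right (abs_nonneg H₀) h₁
      _ ≤ (|K| + |B| + |H₀| + |a|) * t ^ 2 := by nlinarith [abs_nonneg K, sq_nonneg t]

section Rescaling

variable {w H : ℝ → ℝ} {H₀ a M : ℝ}

lemma abs_integral_comp_mul_mul_sub_le (hH : Measurable H)
    (hM : ∀ t, |H t - (H₀ + a * t)| ≤ M * t ^ 2) (hw : Integrable w)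
    (hw₂ : Integrable fun s => s ^ 2 * w s) (hodd : ∫ s, s * w s = 0) (ε : ℝ) :
    |(∫ s, H (ε * s) * w s) - H₀ * ∫ s, w s| ≤ M * ε ^ 2 * ∫ s, |s ^ 2 * w s| := by
  set r : ℝ → ℝ := fun s => (H (ε * s) - (H₀ + a * (ε * s))) * w s with hr_def
  have hr_le : ∀ s, |r s| ≤ M * ε ^ 2 * |s ^ 2 * w s| := fun s => by
    calc |r s| = |H (ε * s) - (H₀ + a * (ε * s))| * |w s| := abs_mul _ _
      _ ≤ M * (ε * s) ^ 2 * |w s| := by gcongr; exact hM _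
      _ = M * ε ^ 2 * |s ^ 2 * w s| := by rw [abs_mul, abs_of_nonneg (sq_nonneg s)]; ring
  have hr : Integrable r := by
    refine (hw₂.abs.const_mul _).mono' ?_ (ae_of_all _ fun s => hr_le s)
    exact ((hH.comp (measurable_const_mul ε)).sub (by fun_prop)).aestronglyMeasurable.mul hw.1
  have hsplit : ∫ s, H (ε * s) * w s =
      (∫ s, r s) + H₀ * (∫ s, w s) + a * ε * ∫ s, s * w s := by
    have hexpand : (fun s => H (ε * s) * w s) = fun s => r s + H₀ * w s + a * ε * (s * w s) := by
      ext s; simp only [hr_def]; ring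
    have hr₀ : Integrable fun s => r s + H₀ * w s := hr.add (hw.const_mul H₀)
    rw [hexpand, integral_add hr₀ ((integrable_mul_of_integrable_sq_mul hw hw₂).const_mul _),
      integral_add hr (hw.const_mul _), integral_const_mul, integral_const_mul]
  rw [hsplit, hodd, mul_zero, add_zero, add_sub_cancel_right]
  calc |∫ s, r s| ≤ ∫ s, |r s| := abs_integral_le_integral_abs
    _ ≤ ∫ s, M * ε ^ 2 * |s ^ 2 * w s| := integral_mono hr.abs (hw₂.abs.const_mul _) hr_le
    _ = M * ε ^ 2 * ∫ s, |s ^ 2 * w s| := integral_const_mul _ _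

lemma abs_integral_mul_comp_div_sub_le (hH : Measurable H)
    (hM : ∀ t, |H t - (H₀ + a * t)| ≤ M * t ^ 2) (hw : Integrable w)
    (hw₂ : Integrable fun s => s ^ 2 * w s) (hodd : ∫ s, s * w s = 0) {ε : ℝ} (hε : 0 < ε) :
    |(∫ t, H t * w (t / ε)) - H₀ * ε * ∫ s, w s| ≤ M * (∫ s, |s ^ 2 * w s|) * ε ^ 3 := by
  have hscale : ∫ t, H t * w (t / ε) = ε * ∫ s, H (ε * s) * w s := by
    have h := Measure.integral_comp_div (fun s => H (ε * s) * w s) ε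
    simp only [mul_div_cancel₀ _ hε.ne'] at h
    rw [h, abs_of_pos hε, smul_eq_mul]
  calc |(∫ t, H t * w (t / ε)) - H₀ * ε * ∫ s, w s|
      = |ε * ((∫ s, H (ε * s) * w s) - H₀ * ∫ s, w s)| := by rw [hscale]; ring_nf
    _ = ε * |(∫ s, H (ε * s) * w s) - H₀ * ∫ s, w s| := by rw [abs_mul, abs_of_pos hε]
    _ ≤ ε * (M * ε ^ 2 * ∫ s, |s ^ 2 * w s|) := by
        gcongr; exact abs_integral_comp_mul_mul_sub_le hH hM hw hw₂ hodd ε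
    _ = M * (∫ s, |s ^ 2 * w s|) * ε ^ 3 := by ring

end Rescaling

section Kink

lemma hasDerivAt_tanh (x : ℝ) : HasDerivAt tanh (1 / cosh x ^ 2) x := by
  have h := (hasDerivAt_sinh x).div (hasDerivAt_cosh x) (cosh_pos x).ne'
  rw [show tanh = sinh / cosh from funext tanh_eq_sinh_div_cosh]
  exact h.congr_deriv (by rw [← sq, ← sq, cosh_sq]; ring)

lemma sq_le_sinh_sq (x : ℝ) : x ^ 2 ≤ sinh x ^ 2 := by
  rw [← sq_abs x, ← sq_abs (sinh x), abs_sinh]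
  exact pow_le_pow_left₀ (abs_nonneg x) (self_le_sinh_iff.2 (abs_nonneg x)) 2

noncomputable def kink (t : ℝ) : ℝ := tanh (t / √2)

lemma deriv_kink (s : ℝ) : deriv kink s = 1 / (√2 * cosh (s / √2) ^ 2) := by
  have h := (hasDerivAt_tanh (s / √2)).comp s ((hasDerivAt_id' s).div_const √2)
  rw [show kink = tanh ∘ fun t => t / √2 from rfl, h.deriv]
  field_simp

lemma deriv_kink_neg (s : ℝ) : deriv kink (-s) = deriv kink s := by
  rw [deriv_kink, deriv_kink, neg_div, cosh_neg]

lemma continuous_deriv_kink : Continuous (deriv kink) := by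
  rw [show deriv kink = fun s => 1 / (√2 * cosh (s / √2) ^ 2) from funext deriv_kink]
  exact continuous_const.div (by fun_prop) fun s => by positivity

lemma one_add_sq_sq_mul_deriv_kink_sq_le (s : ℝ) : (1 + s ^ 2) ^ 2 * deriv kink s ^ 2 ≤ 2 := by
  set x := s / √2 with hx
  have hs : s ^ 2 = 2 * x ^ 2 := by rw [hx, div_pow, sq_sqrt zero_le_two]; field_simp
  have hc : 1 + s ^ 2 ≤ 2 * cosh x ^ 2 := by
    rw [hs, cosh_sq]; linarith [sq_le_sinh_sq x]
  rw [deriv_kink, div_pow, mul_pow, sq_sqrt zero_le_two, one_pow, ← hx, mul_one_div,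
    div_le_iff₀ (by positivity)]
  calc (1 + s ^ 2) ^ 2 ≤ (2 * cosh x ^ 2) ^ 2 := by gcongr
    _ = 2 * (2 * (cosh x ^ 2) ^ 2) := by ring

lemma integrable_deriv_kink_sq : Integrable fun s => deriv kink s ^ 2 := by
  refine integrable_of_one_add_sq_mul_abs_le
    (continuous_deriv_kink.pow 2).aestronglyMeasurable (C := 2) fun s => ?_
  rw [abs_of_nonneg (sq_nonneg _)]
  nlinarith [one_add_sq_sq_mul_deriv_kink_sq_le s, sq_nonneg s, sq_nonneg (s * deriv kink s),
    sq_nonneg (deriv kink s)]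

lemma integrable_sq_mul_deriv_kink_sq : Integrable fun s => s ^ 2 * deriv kink s ^ 2 := by
  refine integrable_of_one_add_sq_mul_abs_le
    ((continuous_pow 2).mul (continuous_deriv_kink.pow 2)).aestronglyMeasurable (C := 2)
    fun s => ?_
  rw [abs_of_nonneg (by positivity)]
  nlinarith [one_add_sq_sq_mul_deriv_kink_sq_le s, sq_nonneg (deriv kink s)]

end Kink

/-- Expansion of the projected error term: if `H(t) = H₀ + a·t + R(t)` with `|R(t)| ≤ K t²`
for `|t| ≤ 1` and `H` bounded by `B`, then `|∫ H·u̇_ε² - H₀·ε·c| ≤ C·ε³`,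
where `u̇_ε(t) = u₁'(t/ε)`, `c = ∫ (u₁')²`, and `C` depends only on `a, K, B`. -/
theorem stmt_14 (u₁ : ℝ → ℝ) (hu : ∀ t, u₁ t = Real.tanh (t / Real.sqrt 2))
    (H : ℝ → ℝ) (hHmeas : Measurable H) (H₀ a K B : ℝ)
    (hB : ∀ t, |H t| ≤ B)
    (hR : ∀ t : ℝ, |t| ≤ 1 → |H t - (H₀ + a * t)| ≤ K * t ^ 2)
    (c : ℝ) (hc : c = ∫ s : ℝ, (deriv u₁ s) ^ 2) :
    ∃ C : ℝ, 0 < C ∧ ∀ ε : ℝ, 0 < ε →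
      |(∫ t : ℝ, H t * (deriv u₁ (t / ε)) ^ 2) - H₀ * ε * c| ≤ C * ε ^ 3 := by
  obtain rfl : u₁ = kink := funext hu
  have hodd : ∫ s, s * deriv kink s ^ 2 = 0 :=
    integral_mul_eq_zero_of_even fun s => by rw [deriv_kink_neg]
  set M := |K| + |B| + |H₀| + |a|
  set I := ∫ s, |s ^ 2 * deriv kink s ^ 2|
  have hMI : 0 ≤ M * I := mul_nonneg (by positivity) (integral_nonneg fun s => abs_nonneg _)
  refine ⟨M * I + 1, by linarith, fun ε hε => ?_⟩
  calc _ ≤ M * I * ε ^ 3 := hc ▸ abs_integral_mul_comp_div_sub_le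
        (w := fun s => deriv kink s ^ 2) hHmeas (abs_sub_linear_le_sq_of_abs_le hB hR)
        integrable_deriv_kink_sq integrable_sq_mul_deriv_kink_sq hodd hε
    _ ≤ (M * I + 1) * ε ^ 3 := by gcongr; linarith
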